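/- arXiv:2408.05185 — 5 statements merged into one kernel-verified Lean document; each statement's English description precedes it below -/
import Mathlib

section
/- Lemma 1 (validity of robust screening): fix a participation vector α : Fin N → ℝ with ∑ i, α i = 1. If every triple (u, x, ω) in the robust screening set Rro j β1 β2 satisfies |f j x ω| ≤ fbar j, then every triple (u, x, ω) in the robust UC feasible set with line j omitted, Fro j β1 β2, satisfies |f j (y x ω) ω| ≤ fbar j, where y x ω is the recourse dispatch. Consequently the line limits identified as redundant by the robust screening model can be removed from the robust UC model without changing its feasible set. -/
open Finset

/-- Line flow of line `k` at dispatch `x` and deviation `ω`. -/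
def lineFlow {N M : ℕ} (a : Fin M → Fin N → ℝ) (lhat : Fin N → ℝ)
    (k : Fin M) (x ω : Fin N → ℝ) : ℝ :=
  ∑ i, a k i * (x i - lhat i + ω i)

/-- Box uncertainty set. -/
def Box {N : ℕ} (lhat β1 β2 : Fin N → ℝ) : Set (Fin N → ℝ) :=
  {ω | ∀ i, β1 i * lhat i ≤ lhat i - ω i ∧ lhat i - ω i ≤ β2 i * lhat i}

/-- Recourse dispatch under deviation `ω` with participation vector `α`. -/
def recourse {N : ℕ} (α : Fin N → ℝ) (x ω : Fin N → ℝ) : Fin N → ℝ :=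
  fun i => x i + α i * (∑ i', ω i')

/-- Robust screening set for line `j` (binary variables relaxed, limit of line `j` omitted). -/
def Rro {N M : ℕ} (a : Fin M → Fin N → ℝ) (xlo xhi : Fin N → ℝ)
    (fbar : Fin M → ℝ) (lhat : Fin N → ℝ) (j : Fin M) (β1 β2 : Fin N → ℝ) :
    Set ((Fin N → ℝ) × (Fin N → ℝ) × (Fin N → ℝ)) :=
  {p | (∀ i, 0 ≤ p.1 i ∧ p.1 i ≤ 1) ∧
       (∀ i, p.1 i * xlo i ≤ p.2.1 i ∧ p.2.1 i ≤ p.1 i * xhi i) ∧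
       p.2.2 ∈ Box lhat β1 β2 ∧
       (∑ i, p.2.1 i = ∑ i, (lhat i - p.2.2 i)) ∧
       (∀ k, k ≠ j → |lineFlow a lhat k p.2.1 p.2.2| ≤ fbar k)}

/-- Robust UC feasible set with the limit of line `j` omitted (binary `u`,
constraints on the recourse dispatch). -/
def Fro {N M : ℕ} (a : Fin M → Fin N → ℝ) (xlo xhi : Fin N → ℝ)
    (fbar : Fin M → ℝ) (lhat : Fin N → ℝ) (α : Fin N → ℝ) (j : Fin M)
    (β1 β2 : Fin N → ℝ) :
    Set ((Fin N → ℝ) × (Fin N → ℝ) × (Fin N → ℝ)) :=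
  {p | (∀ i, p.1 i ∈ ({0, 1} : Set ℝ)) ∧
       (∀ i, p.1 i * xlo i ≤ recourse α p.2.1 p.2.2 i ∧
             recourse α p.2.1 p.2.2 i ≤ p.1 i * xhi i) ∧
       p.2.2 ∈ Box lhat β1 β2 ∧
       (∑ i, recourse α p.2.1 p.2.2 i = ∑ i, (lhat i - p.2.2 i)) ∧
       (∀ k, k ≠ j → |lineFlow a lhat k (recourse α p.2.1 p.2.2) p.2.2| ≤ fbar k)}

/-- Lemma 1: validity of robust screening. -/
theorem robust_screening_valid {N M : ℕ} (a : Fin M → Fin N → ℝ)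
    (xlo xhi : Fin N → ℝ) (fbar : Fin M → ℝ) (lhat : Fin N → ℝ)
    (α : Fin N → ℝ) (hα : ∑ i, α i = 1) (j : Fin M) (β1 β2 : Fin N → ℝ)
    (h : ∀ p ∈ Rro a xlo xhi fbar lhat j β1 β2,
      |lineFlow a lhat j p.2.1 p.2.2| ≤ fbar j) :
    ∀ p ∈ Fro a xlo xhi fbar lhat α j β1 β2,
      |lineFlow a lhat j (recourse α p.2.1 p.2.2) p.2.2| ≤ fbar j := by
  rintro ⟨u, x, ω⟩ ⟨hu, hbd, hbox, hbal, hlim⟩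
  exact h (u, recourse α x ω, ω)
    ⟨fun i => by rcases hu i with h0 | h1 <;> simp_all, hbd, hbox, hbal, hlim⟩
end

section
/- Lemma 2 (validity of chance-constrained screening): if every triple (u, x, r) in the chance-constrained screening set Rcc j (which relaxes the binary commitment variables to [0,1] and omits the tightened limit of line j) satisfies |f j x 0| ≤ fbar j − cf j, then every triple (u, x, r) in the reformulated chance-constrained UC feasible set with line j omitted, Ccc j (binary u), also satisfies |f j x 0| ≤ fbar j − cf j. Consequently removing the line-j constraint identified as redundant by the CC screening model does not change the feasible set of the reformulated chance-constrained UC model. -/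
open Finset

/-- Chance-constrained screening set for line `j` (binary variables relaxed to `[0,1]`,
tightened limit of line `j` omitted). -/
def Rcc {N M : ℕ} (a : Fin M → Fin N → ℝ) (xlo xhi : Fin N → ℝ)
    (fbar : Fin M → ℝ) (lhat : Fin N → ℝ) (α : Fin N → ℝ) (cx : ℝ)
    (cf : Fin M → ℝ) (j : Fin M) :
    Set ((Fin N → ℝ) × (Fin N → ℝ) × (Fin N → ℝ)) :=
  {p | (∀ i, 0 ≤ p.1 i ∧ p.1 i ≤ 1) ∧
       (∀ i, p.2.2 i ≥ α i * cx) ∧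
       (∀ i, p.1 i * xlo i + p.2.2 i ≤ p.2.1 i ∧ p.2.1 i ≤ p.1 i * xhi i - p.2.2 i) ∧
       (∑ i, p.2.1 i = ∑ i, lhat i) ∧
       (∀ k, k ≠ j → |lineFlow a lhat k p.2.1 0| ≤ fbar k - cf k)}

/-- Reformulated chance-constrained UC feasible set with line `j` omitted (binary `u`). -/
def Ccc {N M : ℕ} (a : Fin M → Fin N → ℝ) (xlo xhi : Fin N → ℝ)
    (fbar : Fin M → ℝ) (lhat : Fin N → ℝ) (α : Fin N → ℝ) (cx : ℝ)
    (cf : Fin M → ℝ) (j : Fin M) :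
    Set ((Fin N → ℝ) × (Fin N → ℝ) × (Fin N → ℝ)) :=
  {p | (∀ i, p.1 i ∈ ({0, 1} : Set ℝ)) ∧
       (∀ i, p.2.2 i ≥ α i * cx) ∧
       (∀ i, p.1 i * xlo i + p.2.2 i ≤ p.2.1 i ∧ p.2.1 i ≤ p.1 i * xhi i - p.2.2 i) ∧
       (∑ i, p.2.1 i = ∑ i, lhat i) ∧
       (∀ k, k ≠ j → |lineFlow a lhat k p.2.1 0| ≤ fbar k - cf k)}

/-- Lemma 2: validity of chance-constrained screening. -/
theorem cc_screening_valid {N M : ℕ} (a : Fin M → Fin N → ℝ)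
    (xlo xhi : Fin N → ℝ) (fbar : Fin M → ℝ) (lhat : Fin N → ℝ)
    (α : Fin N → ℝ) (cx : ℝ) (cf : Fin M → ℝ) (j : Fin M)
    (h : ∀ p ∈ Rcc a xlo xhi fbar lhat α cx cf j,
      |lineFlow a lhat j p.2.1 0| ≤ fbar j - cf j) :
    ∀ p ∈ Ccc a xlo xhi fbar lhat α cx cf j,
      |lineFlow a lhat j p.2.1 0| ≤ fbar j - cf j := by
  intro p hp
  obtain ⟨hu, h2, h3, h4, h5⟩ := hp
  have hu' : ∀ i, 0 ≤ p.1 i ∧ p.1 i ≤ 1 := by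
    intro i
    have := hu i
    simp only [Set.mem_insert_iff, Set.mem_singleton_iff] at this
    rcases this with h | h <;> rw [h] <;> norm_num
  exact h p ⟨hu', h2, h3, h4, h5⟩
end

section
/- Convexity part of Theorem 1 (multi-parametric linear programming): let Θ be a convex subset of Fin p → ℝ such that for every θ ∈ Θ there exists a minimizer, i.e. some y ∈ Y θ with c ⬝ᵥ y ≤ c ⬝ᵥ y' for all y' ∈ Y θ. Then the optimal value function z of the right-hand-side parametric LP is convex on Θ (ConvexOn ℝ Θ z). -/
open Matrix

/-- Feasible set of the right-hand-side parametric LP. -/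
def Yfeas {m n p : ℕ} (A : Matrix (Fin m) (Fin n) ℝ)
    (F : Matrix (Fin m) (Fin p) ℝ) (b : Fin m → ℝ) (θ : Fin p → ℝ) :
    Set (Fin n → ℝ) :=
  {y | ∀ k, A.mulVec y k ≤ b k + F.mulVec θ k}

/-- Optimal value function of the right-hand-side parametric LP. -/
noncomputable def zval {m n p : ℕ} (A : Matrix (Fin m) (Fin n) ℝ)
    (F : Matrix (Fin m) (Fin p) ℝ) (b : Fin m → ℝ) (c : Fin n → ℝ)
    (θ : Fin p → ℝ) : ℝ :=
  sInf {v : ℝ | ∃ y ∈ Yfeas A F b θ, v = c ⬝ᵥ y}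

lemma zval_eq_min {m n p : ℕ} (A : Matrix (Fin m) (Fin n) ℝ)
    (F : Matrix (Fin m) (Fin p) ℝ) (b : Fin m → ℝ) (c : Fin n → ℝ)
    (θ : Fin p → ℝ) (y : Fin n → ℝ) (hy : y ∈ Yfeas A F b θ)
    (hmin : ∀ y' ∈ Yfeas A F b θ, c ⬝ᵥ y ≤ c ⬝ᵥ y') :
    zval A F b c θ = c ⬝ᵥ y := by
  apply IsLeast.csInf_eq
  constructor
  · exact ⟨y, hy, rfl⟩
  · rintro v ⟨y', hy', rfl⟩
    exact hmin y' hy'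

/-- Convexity part of Theorem 1 (multi-parametric LP): the optimal value
function is convex on any convex parameter set where a minimizer exists. -/
theorem mplp_value_convex {m n p : ℕ} (A : Matrix (Fin m) (Fin n) ℝ)
    (F : Matrix (Fin m) (Fin p) ℝ) (b : Fin m → ℝ) (c : Fin n → ℝ)
    (Θ : Set (Fin p → ℝ)) (hΘ : Convex ℝ Θ)
    (hmin : ∀ θ ∈ Θ, ∃ y ∈ Yfeas A F b θ, ∀ y' ∈ Yfeas A F b θ, c ⬝ᵥ y ≤ c ⬝ᵥ y') :
    ConvexOn ℝ Θ (zval A F b c) := by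
  refine ⟨hΘ, ?_⟩
  intro θ₁ hθ₁ θ₂ hθ₂ a t ha ht hat
  obtain ⟨y₁, hy₁, hmin₁⟩ := hmin θ₁ hθ₁
  obtain ⟨y₂, hy₂, hmin₂⟩ := hmin θ₂ hθ₂
  have hθ : a • θ₁ + t • θ₂ ∈ Θ := hΘ hθ₁ hθ₂ ha ht hat
  obtain ⟨y₀, hy₀, hmin₀⟩ := hmin _ hθ
  rw [zval_eq_min A F b c θ₁ y₁ hy₁ hmin₁, zval_eq_min A F b c θ₂ y₂ hy₂ hmin₂,
    zval_eq_min A F b c _ y₀ hy₀ hmin₀]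
  have hfeas : a • y₁ + t • y₂ ∈ Yfeas A F b (a • θ₁ + t • θ₂) := by
    intro k
    have h1 := hy₁ k
    have h2 := hy₂ k
    simp only [Matrix.mulVec_add, Matrix.mulVec_smul, Pi.add_apply, Pi.smul_apply,
      smul_eq_mul]
    have hb : b k = a * b k + t * b k := by
      rw [← add_mul, hat, one_mul]
    nlinarith [mul_le_mul_of_nonneg_left h1 ha, mul_le_mul_of_nonneg_left h2 ht]
  calc c ⬝ᵥ y₀ ≤ c ⬝ᵥ (a • y₁ + t • y₂) := hmin₀ _ hfeas
    _ = a * (c ⬝ᵥ y₁) + t * (c ⬝ᵥ y₂) := by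
        rw [dotProduct_add, dotProduct_smul, dotProduct_smul]; rfl
end

section
/- Piecewise-affine part of Theorem 1 (multi-parametric linear programming): let Θ be a nonempty subset of Fin p → ℝ such that for every θ ∈ Θ there exists a minimizer, i.e. some y ∈ Y θ with c ⬝ᵥ y ≤ c ⬝ᵥ y' for all y' ∈ Y θ. Then there exist finitely many affine functions of the parameter — i.e. K : ℕ with K ≥ 1, vectors g : Fin K → (Fin p → ℝ) and constants d : Fin K → ℝ — such that for every θ ∈ Θ, z θ = max over k : Fin K of (g k ⬝ᵥ θ + d k). In particular z is piecewise affine (and convex) on Θ. -/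
open Matrix

section FarkasAux

variable {m n : ℕ}

private lemma sum_smul_dot (l : Fin m → ℝ) (v : Fin m → Fin n → ℝ) (w : Fin n → ℝ) :
    (∑ i, l i • v i) ⬝ᵥ w = ∑ i, l i * (v i ⬝ᵥ w) := by
  simp only [dotProduct, Finset.sum_apply, Pi.smul_apply, smul_eq_mul, Finset.sum_mul,
    Finset.mul_sum, mul_assoc]
  rw [Finset.sum_comm]

private lemma farkas (S : Finset (Fin m)) :
    ∀ (v : Fin m → Fin n → ℝ) (c : Fin n → ℝ),
      (∃ t : Fin m → ℝ, (∀ i, 0 ≤ t i) ∧ (∀ i, i ∉ S → t i = 0) ∧ ∑ i, t i • v i = c) ∨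
      (∃ w : Fin n → ℝ, (∀ i ∈ S, v i ⬝ᵥ w ≤ 0) ∧ 0 < c ⬝ᵥ w) := by
  classical
  induction S using Finset.induction with
  | empty =>
    intro v c
    by_cases hc : c = 0
    · exact Or.inl ⟨0, fun i => le_rfl, fun i _ => rfl, by simp [hc]⟩
    · refine Or.inr ⟨c, by simp, ?_⟩
      have h1 : (0:ℝ) ≤ c ⬝ᵥ c := Finset.sum_nonneg fun i _ => mul_self_nonneg _
      exact lt_of_le_of_ne h1 (Ne.symm (fun h => hc (dotProduct_self_eq_zero.mp h)))
  | @insert a s ha ih =>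
    intro v c
    rcases ih v c with ⟨t, ht0, hts, htsum⟩ | ⟨w, hw, hcw⟩
    · exact Or.inl ⟨t, ht0, fun i hi => hts i fun h => hi (Finset.mem_insert_of_mem h), htsum⟩
    · by_cases hA : v a ⬝ᵥ w ≤ 0
      · refine Or.inr ⟨w, ?_, hcw⟩
        intro i hi
        rcases Finset.mem_insert.mp hi with rfl | hi
        · exact hA
        · exact hw i hi
      · push_neg at hA
        rcases ih (fun i => v i - ((v i ⬝ᵥ w) / (v a ⬝ᵥ w)) • v a)
            (c - ((c ⬝ᵥ w) / (v a ⬝ᵥ w)) • v a) with ⟨t, ht0, hts, htsum⟩ | ⟨u, hu, hcu⟩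
        · set γ := (c ⬝ᵥ w - ∑ i, t i * (v i ⬝ᵥ w)) / (v a ⬝ᵥ w) with hγ
          have hsum0 : ∑ i, t i * (v i ⬝ᵥ w) ≤ 0 := by
            apply Finset.sum_nonpos
            intro i _
            by_cases hi : i ∈ s
            · exact mul_nonpos_of_nonneg_of_nonpos (ht0 i) (hw i hi)
            · simp [hts i hi]
          have hγpos : 0 < γ := div_pos (by linarith) hA
          have hta : t a = 0 := hts a ha
          have h1 : ∑ i, t i • v i = c - γ • v a := by
            have e1 : ∀ i ∈ Finset.univ,
                t i • (v i - ((v i ⬝ᵥ w) / (v a ⬝ᵥ w)) • v a)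
                  = t i • v i - (t i * ((v i ⬝ᵥ w) / (v a ⬝ᵥ w))) • v a := fun i _ => by
              rw [smul_sub, smul_smul]
            rw [Finset.sum_congr rfl e1, Finset.sum_sub_distrib, ← Finset.sum_smul] at htsum
            have e2 : ∑ i, t i * ((v i ⬝ᵥ w) / (v a ⬝ᵥ w))
                = (∑ i, t i * (v i ⬝ᵥ w)) / (v a ⬝ᵥ w) := by
              rw [Finset.sum_div]
              exact Finset.sum_congr rfl fun i _ => by ring
            rw [e2] at htsum
            have : γ • v a = ((c ⬝ᵥ w) / (v a ⬝ᵥ w)) • v a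
                - ((∑ i, t i * (v i ⬝ᵥ w)) / (v a ⬝ᵥ w)) • v a := by
              rw [← sub_smul, hγ, sub_div]
            rw [sub_eq_iff_eq_add] at htsum
            rw [this, htsum]
            abel
          refine Or.inl ⟨fun i => t i + (if i = a then γ else 0), ?_, ?_, ?_⟩
          · intro i
            by_cases hi : i = a <;> simp [hi] <;> [linarith [ht0 a, hγpos.le]; exact ht0 i]
          · intro i hi
            have hia : i ≠ a := fun h => hi (h ▸ Finset.mem_insert_self a s)
            have his : i ∉ s := fun h => hi (Finset.mem_insert_of_mem h)
            simp [hia, hts i his]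
          · have e3 : ∑ i, (if i = a then γ else 0) • v i = γ • v a := by
              rw [Finset.sum_eq_single a]
              · simp
              · intro i _ hia; simp [hia]
              · intro h; exact absurd (Finset.mem_univ a) h
            calc ∑ i, (t i + (if i = a then γ else 0)) • v i
                = ∑ i, t i • v i + ∑ i, (if i = a then γ else 0) • v i := by
                  rw [← Finset.sum_add_distrib]
                  exact Finset.sum_congr rfl fun i _ => by rw [add_smul]
              _ = (c - γ • v a) + γ • v a := by rw [h1, e3]
              _ = c := by abel
        · refine Or.inr ⟨u - ((v a ⬝ᵥ u) / (v a ⬝ᵥ w)) • w, ?_, ?_⟩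
          · intro i hi
            rcases Finset.mem_insert.mp hi with rfl | hi
            · rw [dotProduct_sub, dotProduct_smul, smul_eq_mul]
              rw [div_mul_cancel₀ _ (ne_of_gt hA)]
              simp
            · have h2 := hu i hi
              rw [sub_dotProduct, smul_dotProduct, smul_eq_mul] at h2
              rw [dotProduct_sub, dotProduct_smul, smul_eq_mul]
              have : (v a ⬝ᵥ u) / (v a ⬝ᵥ w) * (v i ⬝ᵥ w)
                  = (v i ⬝ᵥ w) / (v a ⬝ᵥ w) * (v a ⬝ᵥ u) := by ring
              linarith
          · have h2 := hcu
            rw [sub_dotProduct, smul_dotProduct, smul_eq_mul] at h2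
            rw [dotProduct_sub, dotProduct_smul, smul_eq_mul]
            have : (v a ⬝ᵥ u) / (v a ⬝ᵥ w) * (c ⬝ᵥ w)
                = (c ⬝ᵥ w) / (v a ⬝ᵥ w) * (v a ⬝ᵥ u) := by ring
            linarith

/-- Bespoke linear-independence-on-support predicate. -/
private def IndepSupp (v : Fin m → Fin n → ℝ) (l : Fin m → ℝ) : Prop :=
  ∀ d : Fin m → ℝ, (∀ i, l i = 0 → d i = 0) → ∑ i, d i • v i = 0 → d = 0

private lemma carath (v : Fin m → Fin n → ℝ) :
    ∀ (N : ℕ) (t : Fin m → ℝ), (∀ i, 0 ≤ t i) →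
      (Finset.univ.filter fun i => t i ≠ 0).card ≤ N →
      ∃ s : Fin m → ℝ, (∀ i, 0 ≤ s i) ∧ (∀ i, t i = 0 → s i = 0) ∧ IndepSupp v s ∧
        ∑ i, s i • v i = ∑ i, t i • v i := by
  classical
  intro N
  induction N with
  | zero =>
    intro t ht hcard
    have hz : ∀ i, t i = 0 := by
      intro i
      by_contra hti
      have : i ∈ Finset.univ.filter fun i => t i ≠ 0 := by simp [hti]
      have := Finset.card_pos.mpr ⟨i, this⟩
      omega
    refine ⟨t, ht, fun i h => h, ?_, rfl⟩
    intro d hd _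
    funext i
    exact hd i (hz i)
  | succ N ihN =>
    intro t ht hcard
    by_cases hind : IndepSupp v t
    · exact ⟨t, ht, fun i h => h, hind, rfl⟩
    · unfold IndepSupp at hind
      push_neg at hind
      obtain ⟨d, hd0, hdsum, hdne⟩ := hind
      have hpos : ∃ e : Fin m → ℝ, (∀ i, t i = 0 → e i = 0) ∧ (∑ i, e i • v i = 0)
          ∧ ∃ i, 0 < e i := by
        obtain ⟨j, hj⟩ := Function.ne_iff.mp hdne
        rcases lt_or_gt_of_ne hj with h | h
        · refine ⟨-d, fun i hi => by simp [hd0 i hi], ?_, ⟨j, by simpa using h⟩⟩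
          simp only [Pi.neg_apply, neg_smul, Finset.sum_neg_distrib, hdsum, neg_zero]
        · exact ⟨d, hd0, hdsum, ⟨j, h⟩⟩
      obtain ⟨e, he0, hesum, j0, hj0⟩ := hpos
      set P := Finset.univ.filter (fun i => 0 < e i) with hP
      have hPne : P.Nonempty := ⟨j0, by simp [hP, hj0]⟩
      obtain ⟨i0, hi0P, hi0⟩ := Finset.exists_mem_eq_inf' hPne (fun i => t i / e i)
      set lam := P.inf' hPne (fun i => t i / e i) with hlam
      have hi0e : 0 < e i0 := by
        simp only [hP, Finset.mem_filter] at hi0P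
        exact hi0P.2
      have hlam0 : 0 ≤ lam := by
        rw [hi0]
        exact div_nonneg (ht i0) hi0e.le
      set s' : Fin m → ℝ := fun i => t i - lam * e i with hs'
      have hs'0 : ∀ i, 0 ≤ s' i := by
        intro i
        by_cases hei : 0 < e i
        · have h1 : lam ≤ t i / e i := Finset.inf'_le _ (by simp [hP, hei])
          have h2 := (le_div_iff₀ hei).mp h1
          simp only [hs']
          linarith
        · push_neg at hei
          have h1 : lam * e i ≤ 0 := mul_nonpos_of_nonneg_of_nonpos hlam0 hei
          have h2 := ht i
          simp only [hs']
          linarith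
      have hsupp : ∀ i, t i = 0 → s' i = 0 := fun i hti => by
        simp [hs', hti, he0 i hti]
      have hi0z : s' i0 = 0 := by
        simp only [hs', hi0, div_mul_cancel₀ _ (ne_of_gt hi0e), sub_self]
      have hti0 : t i0 ≠ 0 := by
        intro h
        rw [he0 i0 h] at hi0e
        exact lt_irrefl 0 hi0e
      have hsum' : ∑ i, s' i • v i = ∑ i, t i • v i := by
        have e1 : ∀ i ∈ Finset.univ, s' i • v i = t i • v i - lam • (e i • v i) := fun i _ => by
          show (t i - lam * e i) • v i = t i • v i - lam • e i • v i
          rw [sub_smul, smul_smul]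
        rw [Finset.sum_congr rfl e1, Finset.sum_sub_distrib, ← Finset.smul_sum, hesum,
          smul_zero, sub_zero]
      have hcard' : (Finset.univ.filter fun i => s' i ≠ 0).card ≤ N := by
        have hsub : (Finset.univ.filter fun i => s' i ≠ 0)
            ⊆ (Finset.univ.filter fun i => t i ≠ 0).erase i0 := by
          intro i hi
          simp only [Finset.mem_filter, Finset.mem_univ, true_and] at hi
          refine Finset.mem_erase.mpr ⟨?_, ?_⟩
          · rintro rfl
            exact hi hi0z
          · simp only [Finset.mem_filter, Finset.mem_univ, true_and]
            exact fun h => hi (hsupp i h)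
        have h1 := Finset.card_le_card hsub
        have hmem : i0 ∈ Finset.univ.filter fun i => t i ≠ 0 := by simp [hti0]
        have h2 := Finset.card_erase_of_mem hmem
        have h3 := Finset.card_pos.mpr ⟨i0, hmem⟩
        omega
      obtain ⟨s, h1, h2, h3, h4⟩ := ihN s' hs'0 hcard'
      exact ⟨s, h1, fun i hti => h2 i (hsupp i hti), h3, h4.trans hsum'⟩

private lemma exists_eps {m : ℕ} (T : Finset (Fin m)) (δ r : Fin m → ℝ)
    (hδ : ∀ i ∈ T, 0 < δ i) : ∃ ε : ℝ, 0 < ε ∧ ∀ i ∈ T, ε * r i ≤ δ i := by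
  by_cases hTne : T.Nonempty
  · set μ := min 1 (T.inf' hTne fun i => δ i / (|r i| + 1)) with hμ
    have hμ0 : 0 < μ := by
      refine lt_min one_pos ?_
      rw [Finset.lt_inf'_iff]
      exact fun i hi => div_pos (hδ i hi) (by positivity)
    refine ⟨μ, hμ0, ?_⟩
    intro i hi
    have h8 : μ ≤ δ i / (|r i| + 1) := min_le_of_right_le (Finset.inf'_le _ hi)
    have h10 : (0:ℝ) < |r i| + 1 := by positivity
    calc μ * r i ≤ μ * |r i| := mul_le_mul_of_nonneg_left (le_abs_self _) hμ0.le
      _ ≤ μ * (|r i| + 1) := mul_le_mul_of_nonneg_left (by linarith) hμ0.le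
      _ ≤ (δ i / (|r i| + 1)) * (|r i| + 1) := mul_le_mul_of_nonneg_right h8 h10.le
      _ = δ i := div_mul_cancel₀ _ (ne_of_gt h10)
  · exact ⟨1, one_pos, fun i hi => absurd ⟨i, hi⟩ hTne⟩

end FarkasAux


/-- Piecewise-affine part of Theorem 1 (multi-parametric LP): the optimal value
function is a finite maximum of affine functions of the parameter. -/
theorem mplp_value_piecewise_affine {m n p : ℕ} (A : Matrix (Fin m) (Fin n) ℝ)
    (F : Matrix (Fin m) (Fin p) ℝ) (b : Fin m → ℝ) (c : Fin n → ℝ)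
    (Θ : Set (Fin p → ℝ)) (hne : Θ.Nonempty)
    (hmin : ∀ θ ∈ Θ, ∃ y ∈ Yfeas A F b θ, ∀ y' ∈ Yfeas A F b θ, c ⬝ᵥ y ≤ c ⬝ᵥ y') :
    ∃ (K : ℕ) (_ : K ≥ 1) (g : Fin K → (Fin p → ℝ)) (d : Fin K → ℝ),
      ∀ θ ∈ Θ, zval A F b c θ = ⨆ k : Fin K, (g k ⬝ᵥ θ + d k) := by
  classical
  set v : Fin m → Fin n → ℝ := fun i j => A i j with hv
  set D : Set (Fin m → ℝ) :=
    {l | (∀ i, 0 ≤ l i) ∧ (∑ i, l i • v i) = -c ∧ IndepSupp v l} with hD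
  -- weak duality
  have weak : ∀ l ∈ D, ∀ θ : Fin p → ℝ, ∀ y ∈ Yfeas A F b θ,
      -(l ⬝ᵥ (b + F.mulVec θ)) ≤ c ⬝ᵥ y := by
    rintro l ⟨hl0, hlsum, -⟩ θ y hy
    have h1 : 0 ≤ ∑ i, l i * ((b i + F.mulVec θ i) - A.mulVec y i) :=
      Finset.sum_nonneg fun i _ => mul_nonneg (hl0 i) (sub_nonneg.mpr (hy i))
    have h2 : ∑ i, l i * (A.mulVec y i) = -(c ⬝ᵥ y) := by
      have h3 := sum_smul_dot l v y
      rw [hlsum, neg_dotProduct] at h3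
      calc ∑ i, l i * (A.mulVec y i) = ∑ i, l i * (v i ⬝ᵥ y) := rfl
        _ = -(c ⬝ᵥ y) := h3.symm
    have h4 : l ⬝ᵥ (b + F.mulVec θ) = ∑ i, l i * (b i + F.mulVec θ i) := rfl
    have h5 : ∑ i, l i * ((b i + F.mulVec θ i) - A.mulVec y i)
        = ∑ i, l i * (b i + F.mulVec θ i) - ∑ i, l i * (A.mulVec y i) := by
      rw [← Finset.sum_sub_distrib]
      exact Finset.sum_congr rfl fun i _ => by ring
    rw [h5, h2] at h1
    rw [h4]
    linarith
  -- strong duality at a minimizer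
  have strong : ∀ θ ∈ Θ, ∃ y ∈ Yfeas A F b θ, (∀ y' ∈ Yfeas A F b θ, c ⬝ᵥ y ≤ c ⬝ᵥ y') ∧
      ∃ l ∈ D, -(l ⬝ᵥ (b + F.mulVec θ)) = c ⬝ᵥ y := by
    intro θ hθ
    obtain ⟨y, hy, hopt⟩ := hmin θ hθ
    refine ⟨y, hy, hopt, ?_⟩
    set I : Finset (Fin m) := Finset.univ.filter
      (fun i => A.mulVec y i = b i + F.mulVec θ i) with hI
    rcases farkas I v (-c) with ⟨t, ht0, hts, htsum⟩ | ⟨w, hw, hcw⟩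
    · obtain ⟨l, hl0, hlsupp, hlind, hlsum⟩ := carath v _ t ht0 le_rfl
      have hlD : l ∈ D := ⟨hl0, hlsum.trans htsum, hlind⟩
      refine ⟨l, hlD, ?_⟩
      have hact : ∀ i, l i ≠ 0 → A.mulVec y i = b i + F.mulVec θ i := by
        intro i hli
        have hti : t i ≠ 0 := fun h => hli (hlsupp i h)
        have hiI : i ∈ I := by
          by_contra h
          exact hti (hts i h)
        simpa [hI] using hiI
      have h6 : l ⬝ᵥ (b + F.mulVec θ) = ∑ i, l i * (A.mulVec y i) := by
        show ∑ i, l i * (b i + F.mulVec θ i) = _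
        apply Finset.sum_congr rfl
        intro i _
        by_cases hli : l i = 0
        · simp [hli]
        · rw [hact i hli]
      have h7 : ∑ i, l i * (A.mulVec y i) = -(c ⬝ᵥ y) := by
        have h3 := sum_smul_dot l v y
        rw [hlsum.trans htsum, neg_dotProduct] at h3
        calc ∑ i, l i * (A.mulVec y i) = ∑ i, l i * (v i ⬝ᵥ y) := rfl
          _ = -(c ⬝ᵥ y) := h3.symm
      rw [h6, h7, neg_neg]
    · exfalso
      have hcw' : c ⬝ᵥ w < 0 := by
        rw [neg_dotProduct] at hcw
        linarith
      set T : Finset (Fin m) := Finset.univ.filter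
        (fun i => ¬(A.mulVec y i = b i + F.mulVec θ i)) with hT
      have hδ : ∀ i ∈ T, 0 < (b i + F.mulVec θ i) - A.mulVec y i := by
        intro i hi
        simp only [hT, Finset.mem_filter, Finset.mem_univ, true_and] at hi
        have := hy i
        cases' lt_or_eq_of_le this with h h
        · linarith
        · exact absurd h hi
      obtain ⟨ε, hε0, hεb⟩ := exists_eps T (fun i => (b i + F.mulVec θ i) - A.mulVec y i)
        (fun i => A.mulVec w i) hδ
      have hy' : y + ε • w ∈ Yfeas A F b θ := by
        intro i
        have hexp : A.mulVec (y + ε • w) i = A.mulVec y i + ε * A.mulVec w i := by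
          rw [mulVec_add, mulVec_smul]
          simp
        by_cases hi : A.mulVec y i = b i + F.mulVec θ i
        · have hiI : i ∈ I := by simp [hI, hi]
          have hwi : A.mulVec w i ≤ 0 := hw i hiI
          have : ε * A.mulVec w i ≤ 0 := mul_nonpos_of_nonneg_of_nonpos hε0.le hwi
          rw [hexp]
          linarith
        · have hiT : i ∈ T := by simp [hT, hi]
          have := hεb i hiT
          rw [hexp]
          linarith
      have hobj : c ⬝ᵥ (y + ε • w) < c ⬝ᵥ y := by
        rw [dotProduct_add, dotProduct_smul, smul_eq_mul]
        have : ε * (c ⬝ᵥ w) < 0 := mul_neg_of_pos_of_neg hε0 hcw'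
        linarith
      exact absurd (hopt _ hy') (not_le.mpr hobj)
  -- D is finite
  have hDfin : D.Finite := by
    have hinj : Set.InjOn (fun l : Fin m → ℝ => {i | l i ≠ 0}) D := by
      rintro l hl l' hl' hsupp0
      have hsupp : {i | l i ≠ 0} = {i | l' i ≠ 0} := hsupp0
      have hzero : ∀ i, l i = 0 → (l - l') i = 0 := by
        intro i hi
        have h1 : i ∉ {i | l i ≠ 0} := by simp [hi]
        rw [hsupp] at h1
        simp only [Set.mem_setOf_eq, not_not] at h1
        simp [hi, h1]
      have hsum : ∑ i, (l - l') i • v i = 0 := by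
        have e1 : ∀ i ∈ Finset.univ, (l - l') i • v i = l i • v i - l' i • v i := fun i _ => by
          show (l i - l' i) • v i = _
          rw [sub_smul]
        rw [Finset.sum_congr rfl e1, Finset.sum_sub_distrib, hl.2.1, hl'.2.1, sub_self]
      have := hl.2.2 (l - l') hzero hsum
      exact sub_eq_zero.mp this
    exact Set.Finite.of_finite_image (Set.toFinite _) hinj
  obtain ⟨θ0, hθ0⟩ := hne
  obtain ⟨y0, -, -, l0, hl0D, -⟩ := strong θ0 hθ0
  set Dfin : Finset (Fin m → ℝ) := hDfin.toFinset with hDfin'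
  have hDne : Dfin.Nonempty := ⟨l0, hDfin.mem_toFinset.mpr hl0D⟩
  have hFK : 0 < Dfin.card := Finset.card_pos.mpr hDne
  refine ⟨Dfin.card, hFK, fun k => -((Dfin.equivFin.symm k : Fin m → ℝ) ᵥ* F),
    fun k => -((Dfin.equivFin.symm k : Fin m → ℝ) ⬝ᵥ b), ?_⟩
  intro θ hθ
  obtain ⟨y, hy, hopt, l, hlD, hleq⟩ := strong θ hθ
  have hz : zval A F b c θ = c ⬝ᵥ y := by
    have hmem : c ⬝ᵥ y ∈ {x : ℝ | ∃ y' ∈ Yfeas A F b θ, x = c ⬝ᵥ y'} := ⟨y, hy, rfl⟩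
    have hlb : ∀ x ∈ {x : ℝ | ∃ y' ∈ Yfeas A F b θ, x = c ⬝ᵥ y'}, c ⬝ᵥ y ≤ x := by
      rintro x ⟨y', hy', rfl⟩
      exact hopt y' hy'
    exact le_antisymm (csInf_le ⟨_, hlb⟩ hmem) (le_csInf ⟨_, hmem⟩ hlb)
  have haff : ∀ l' : Fin m → ℝ, (-(l' ᵥ* F)) ⬝ᵥ θ + (-(l' ⬝ᵥ b)) = -(l' ⬝ᵥ (b + F.mulVec θ)) := by
    intro l'
    rw [neg_dotProduct, dotProduct_add, ← dotProduct_mulVec]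
    ring
  have hnonempty : Nonempty (Fin Dfin.card) := ⟨⟨0, hFK⟩⟩
  rw [hz]
  have hub : ∀ k : Fin Dfin.card,
      -((Dfin.equivFin.symm k : Fin m → ℝ) ᵥ* F) ⬝ᵥ θ
        + -((Dfin.equivFin.symm k : Fin m → ℝ) ⬝ᵥ b) ≤ c ⬝ᵥ y := by
    intro k
    rw [haff]
    exact weak _ (hDfin.mem_toFinset.mp (Dfin.equivFin.symm k).2) θ y hy
  apply le_antisymm
  · have hk0 : -((Dfin.equivFin.symm (Dfin.equivFin ⟨l, hDfin.mem_toFinset.mpr hlD⟩) : Fin m → ℝ) ᵥ* F) ⬝ᵥ θ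
        + -((Dfin.equivFin.symm (Dfin.equivFin ⟨l, hDfin.mem_toFinset.mpr hlD⟩) : Fin m → ℝ) ⬝ᵥ b) = c ⬝ᵥ y := by
      rw [Equiv.symm_apply_apply, haff]
      exact hleq
    calc c ⬝ᵥ y = _ := hk0.symm
      _ ≤ _ := le_ciSup (f := fun k : Fin Dfin.card =>
            -((Dfin.equivFin.symm k : Fin m → ℝ) ᵥ* F) ⬝ᵥ θ
              + -((Dfin.equivFin.symm k : Fin m → ℝ) ⬝ᵥ b))
          (Set.Finite.bddAbove (Set.finite_range _))
          (Dfin.equivFin ⟨l, hDfin.mem_toFinset.mpr hlD⟩)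
  · exact ciSup_le hub
end

section
/- Affinity of the optimal value function on a critical region (Theorem 1, 'affine in each critical region'): let s : Fin n → Fin m be injective, let As : Matrix (Fin n) (Fin n) ℝ be the submatrix As i j := A (s i) j, and assume As is invertible. Suppose λ : Fin m → ℝ satisfies λ k ≥ 0 for all k, A.transpose.mulVec λ = −c, and λ k = 0 whenever k is not in the range of s. Let Θ0 be a set of parameters such that for every θ ∈ Θ0 the point yθ := As⁻¹.mulVec (fun i => b (s i) + F.mulVec θ (s i)) lies in Y θ. Then for every θ ∈ Θ0, yθ is optimal (c ⬝ᵥ yθ ≤ c ⬝ᵥ y for all y ∈ Y θ) and z θ = c ⬝ᵥ As⁻¹.mulVec (fun i => b (s i) + F.mulVec θ (s i)); in particular, on Θ0 the value function z agrees with an affine function of θ. -/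
open Matrix

/-- Affinity of the optimal value function on a critical region: on the region
where the basic solution associated with the active set `s` is feasible, it is
optimal and the value function is an affine function of the parameter. -/
theorem mplp_value_affine_on_critical_region {m n p : ℕ}
    (A : Matrix (Fin m) (Fin n) ℝ) (F : Matrix (Fin m) (Fin p) ℝ)
    (b : Fin m → ℝ) (c : Fin n → ℝ)
    (s : Fin n → Fin m) (hs : Function.Injective s)
    (As : Matrix (Fin n) (Fin n) ℝ) (hAs : As = fun i j => A (s i) j)
    (hinv : IsUnit As.det)
    (lam : Fin m → ℝ) (hlam : ∀ k, 0 ≤ lam k)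
    (hstat : A.transpose.mulVec lam = -c)
    (hsupp : ∀ k, k ∉ Set.range s → lam k = 0)
    (Θ0 : Set (Fin p → ℝ))
    (hfeas : ∀ θ ∈ Θ0,
      As⁻¹.mulVec (fun i => b (s i) + F.mulVec θ (s i)) ∈ Yfeas A F b θ) :
    ∀ θ ∈ Θ0,
      (∀ y ∈ Yfeas A F b θ,
        c ⬝ᵥ As⁻¹.mulVec (fun i => b (s i) + F.mulVec θ (s i)) ≤ c ⬝ᵥ y) ∧
      zval A F b c θ = c ⬝ᵥ As⁻¹.mulVec (fun i => b (s i) + F.mulVec θ (s i)) := by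
  intro θ hθ
  set g : Fin n → ℝ := fun i => b (s i) + F.mulVec θ (s i) with hg
  set y0 : Fin n → ℝ := As⁻¹.mulVec g with hy0
  have hy0feas : y0 ∈ Yfeas A F b θ := hfeas θ hθ
  have hAsy0 : As.mulVec y0 = g := by
    rw [hy0, Matrix.mulVec_mulVec, Matrix.mul_nonsing_inv _ hinv, Matrix.one_mulVec]
  have hAy0 : ∀ i, A.mulVec y0 (s i) = g i := by
    intro i
    have h2 : A.mulVec y0 (s i) = As.mulVec y0 i := by
      simp [Matrix.mulVec, dotProduct, hAs]
    rw [h2, hAsy0]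
  have hcy : ∀ y : Fin n → ℝ, c ⬝ᵥ y = -(lam ⬝ᵥ A.mulVec y) := by
    intro y
    rw [Matrix.dotProduct_mulVec, ← Matrix.mulVec_transpose, hstat]
    simp [neg_dotProduct]
  have hopt : ∀ y ∈ Yfeas A F b θ, c ⬝ᵥ y0 ≤ c ⬝ᵥ y := by
    intro y hy
    rw [hcy, hcy, neg_le_neg_iff]
    have h1 : lam ⬝ᵥ A.mulVec y ≤ lam ⬝ᵥ (fun k => b k + F.mulVec θ k) := by
      apply Finset.sum_le_sum
      intro k _
      exact mul_le_mul_of_nonneg_left (hy k) (hlam k)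
    have h2 : lam ⬝ᵥ (fun k => b k + F.mulVec θ k) = lam ⬝ᵥ A.mulVec y0 := by
      apply Finset.sum_congr rfl
      intro k _
      by_cases hk : k ∈ Set.range s
      · obtain ⟨i, rfl⟩ := hk
        rw [hAy0 i]
      · rw [hsupp k hk]
        ring
    linarith
  refine ⟨hopt, ?_⟩
  have hmem : c ⬝ᵥ y0 ∈ {v : ℝ | ∃ y ∈ Yfeas A F b θ, v = c ⬝ᵥ y} :=
    ⟨y0, hy0feas, rfl⟩
  have hlb : ∀ v ∈ {v : ℝ | ∃ y ∈ Yfeas A F b θ, v = c ⬝ᵥ y}, c ⬝ᵥ y0 ≤ v := by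
    rintro v ⟨y, hy, rfl⟩
    exact hopt y hy
  exact le_antisymm (csInf_le ⟨_, hlb⟩ hmem) (le_csInf ⟨_, hmem⟩ hlb)
end
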